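/- In the polynomial ring B = A[t] (char K ≠ 2), with d_2(t) as above and d_3(t) the 6×2 matrix with rows (b+t, 2a), (−2c, −b+t), (−v_1, −u_1), (v_2, u_2), (v_3, u_3), (−v_4, −u_4), the matrix product d_2(t) · d_3(t) is the zero 5×2 matrix. -/

import Mathlib

noncomputable section
open MvPolynomial Matrix

/-- The polynomial ring in 17 variables. -/
abbrev PB (K : Type*) [Field K] := MvPolynomial (Fin 17) K

variable {K : Type*} [Field K]

def x12 : PB K := X 0
def x13 : PB K := X 1
def x14 : PB K := X 2
def x23 : PB K := X 3
def x24 : PB K := X 4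
def x34 : PB K := X 5
def y12 : PB K := X 6
def y13 : PB K := X 7
def y14 : PB K := X 8
def y23 : PB K := X 9
def y24 : PB K := X 10
def y34 : PB K := X 11
def z123 : PB K := X 12
def z124 : PB K := X 13
def z134 : PB K := X 14
def z234 : PB K := X 15
def tv : PB K := X 16

/-- `Dl xij yij xkl ykl` is the 2x2 minor Delta(ij,kl) = x_ij*y_kl - x_kl*y_ij. -/
def Dl (p q r s : PB K) : PB K := p * s - r * q

def del1 : PB K := Dl x12 y12 x34 y34
def del2 : PB K := Dl x13 y13 x24 y24
def del3 : PB K := Dl x14 y14 x23 y23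

/-- The cubic u_{1,2,3}. -/
def u123 : PB K :=
  -2*z234 * Dl x12 y12 x13 y13 + 2*z134 * Dl x12 y12 x23 y23
    - 2*z124 * Dl x13 y13 x23 y23 + z123 * (del2 - del1 + del3)

/-- The cubic u_{1,2,4}. -/
def u124 : PB K :=
  2*z234 * Dl x12 y12 x14 y14 - 2*z134 * Dl x12 y12 x24 y24
    + z124 * (del1 + del2 + del3) - 2*z123 * Dl x14 y14 x24 y24

/-- The cubic u_{1,3,4}. -/
def u134 : PB K :=
  2*z234 * Dl x13 y13 x14 y14 + z134 * (-del1 - del2 + del3)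
    + 2*z124 * Dl x13 y13 x34 y34 - 2*z123 * Dl x14 y14 x34 y34

/-- The cubic u_{2,3,4}. -/
def u234 : PB K :=
  z234 * (-del1 - del2 - del3) - 2*z134 * Dl x23 y23 x24 y24
    + 2*z124 * Dl x23 y23 x34 y34 - 2*z123 * Dl x24 y24 x34 y34

def pa : PB K := x12*x34 - x13*x24 + x14*x23
def pb : PB K := x12*y34 - x13*y24 + x14*y23 + x34*y12 - x24*y13 + x23*y14
def pc : PB K := y12*y34 - y13*y24 + y14*y23

/-- The quartic u = b^2 - 4ac. -/
def uQ : PB K := pb^2 - 4*pa*pc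

/-- u_1 = sum over i # 1 of (-1)^i x_{i,1} z_hat-i (skew convention x_{i,j} = -x_{j,i}). -/
def u1 : PB K := -x12*z134 + x13*z124 - x14*z123
def u2 : PB K := -x12*z234 + x23*z124 - x24*z123
def u3 : PB K := -x13*z234 + x23*z134 - x34*z123
def u4 : PB K := -x14*z234 + x24*z134 - x34*z124
def v1 : PB K := -y12*z134 + y13*z124 - y14*z123
def v2 : PB K := -y12*z234 + y23*z124 - y24*z123
def v3 : PB K := -y13*z234 + y23*z134 - y34*z123
def v4 : PB K := -y14*z234 + y24*z134 - y34*z124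
/-- The 5x6 matrix d2(t). -/
def d2t : Matrix (Fin 5) (Fin 6) (PB K) := Matrix.of ![
    ![v1, u1, -del1 + del2 - del3 + tv, 2 * Dl x13 y13 x14 y14, -2 * Dl x12 y12 x14 y14, -2 * Dl x12 y12 x13 y13],
    ![-v2, -u2, -2 * Dl x23 y23 x24 y24, -del1 - del2 + del3 + tv, 2 * Dl x12 y12 x24 y24, 2 * Dl x12 y12 x23 y23],
    ![v3, u3, 2 * Dl x23 y23 x34 y34, 2 * Dl x13 y13 x34 y34, -del1 - del2 - del3 - tv, -2 * Dl x13 y13 x23 y23],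
    ![v4, u4, 2 * Dl x24 y24 x34 y34, 2 * Dl x14 y14 x34 y34, -2 * Dl x14 y14 x24 y24, del1 - del2 - del3 + tv],
    ![0, 0, -z234, -z134, z124, z123]]

/-- The 6x2 matrix d3(t). -/
def d3t : Matrix (Fin 6) (Fin 2) (PB K) := Matrix.of ![
    ![pb + tv, 2*pa], ![-2*pc, -pb + tv], ![-v1, -u1], ![v2, u2], ![v3, u3], ![-v4, -u4]]

/-! The entries of `d2t * d3t` are polynomial identities in the 17 variables. In the first four
rows the parameter `t` only contributes the cancelling pair `t * w - t * w` with `w` one of the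
`u i`, `v i`, and what is left is an identity of degree five. The last row is an alternating sum
`∑ ± z_{ĵ} u_j`, which vanishes because each monomial `x_{ij} z_{î} z_{ĵ}` arises once from `u_i`
and once from `u_j`, with opposite signs since `x_{ji} = -x_{ij}`. -/

theorem alternating_sum_z_mul_u : z234 * u1 - z134 * u2 + z124 * u3 - z123 * u4 = (0 : PB K) := by
  simp only [u1, u2, u3, u4]
  ring

theorem alternating_sum_z_mul_v : z234 * v1 - z134 * v2 + z124 * v3 - z123 * v4 = (0 : PB K) := by
  simp only [v1, v2, v3, v4]
  ring

theorem d2t_last_dotProduct_d3t (j : Fin 2) : d2t (Fin.last 4) ⬝ᵥ d3tᵀ j = (0 : PB K) := by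
  fin_cases j <;>
    simp only [dotProduct, Fin.sum_univ_six, transpose_apply, d2t, d3t, of_apply, Fin.isValue,
      Fin.zero_eta, Fin.mk_one, Fin.reduceLast, cons_val]
  · linear_combination (alternating_sum_z_mul_v (K := K))
  · linear_combination (alternating_sum_z_mul_u (K := K))

theorem d2t_castSucc_dotProduct_d3t (i : Fin 4) (j : Fin 2) :
    d2t i.castSucc ⬝ᵥ d3tᵀ j = (0 : PB K) := by
  fin_cases i <;> fin_cases j <;>
    simp only [dotProduct, Fin.sum_univ_six, transpose_apply, d2t, d3t, of_apply, Fin.isValue,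
      Fin.zero_eta, Fin.mk_one, Fin.castSucc_zero, Fin.castSucc_one, Fin.reduceFinMk,
      Fin.reduceCastSucc, cons_val] <;>
    simp only [u1, u2, u3, u4, v1, v2, v3, v4, del1, del2, del3, pa, pb, pc, Dl] <;>
    ring

theorem d2t_mul_d3t_general :
    d2t * d3t = (0 : Matrix (Fin 5) (Fin 2) (PB K)) := by
  refine Matrix.ext fun i j => ?_
  -- not `rw [mul_apply']`: the product in the statement elaborates via the `CStarMatrix` instance
  change d2t i ⬝ᵥ d3tᵀ j = (0 : PB K)
  induction i using Fin.lastCases with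
  | last => exact d2t_last_dotProduct_d3t j
  | cast i => exact d2t_castSucc_dotProduct_d3t i j

/-- d2(t) * d3(t) = 0. -/
theorem d2t_mul_d3t (hchar : ringChar K ≠ 2) :
    d2t * d3t = (0 : Matrix (Fin 5) (Fin 2) (PB K)) :=
  d2t_mul_d3t_general
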